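/- If T rewrites to S by a list Ω₊ of child duplication rules π⁺, then h(S) = h(T), w(S) ≤ |Ω₊| + w(T), and n(S) ≤ 2^{|Ω₊|} · n(T) − (2^{|Ω₊|} − 1). -/

import Mathlib

inductive MTree : Type where
  | node : List ℕ → List (ℕ × MTree) → MTree

namespace MTree

mutual
def numNodes : MTree → ℕ
  | .node _ Γ => 1 + numNodesL Γ
def numNodesL : List (ℕ × MTree) → ℕ
  | [] => 0
  | (_, t) :: Γ => numNodes t + numNodesL Γ
end

mutual
def height : MTree → ℕ
  | .node _ [] => 0
  | .node _ (p :: Γ) => heightL (p :: Γ) + 1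
def heightL : List (ℕ × MTree) → ℕ
  | [] => 0
  | (_, t) :: Γ => max (height t) (heightL Γ)
end

mutual
def width : MTree → ℕ
  | .node _ [] => 1
  | .node _ (p :: Γ) => max (p :: Γ).length (widthL (p :: Γ))
def widthL : List (ℕ × MTree) → ℕ
  | [] => 0
  | (_, t) :: Γ => max (width t) (widthL Γ)
end

def sum : MTree → MTree → MTree
  | .node Δ Γ, .node Δ' Γ' => .node (Δ ++ Δ') (Γ ++ Γ')

inductive IsPos : List ℕ → MTree → Prop where
  | nil : ∀ t, IsPos [] t
  | cons : ∀ {Δ : List ℕ} {Γ : List (ℕ × MTree)} {i : ℕ} {k : List ℕ}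
      (h : i < Γ.length), IsPos k (Γ.get ⟨i, h⟩).2 → IsPos (i :: k) (.node Δ Γ)

def subtree : List ℕ → MTree → MTree
  | [], t => t
  | i :: k, .node Δ Γ =>
    match Γ[i]? with
    | some p => subtree k p.2
    | none => .node Δ Γ

def replace : List ℕ → MTree → MTree → MTree
  | [], _, s => s
  | i :: k, .node Δ Γ, s =>
      .node Δ (Γ.modify i (fun p => (p.1, replace k p.2 s)))

inductive RhoPlus : MTree → MTree → Prop where
  | mk : ∀ (Δ : List ℕ) (Γ : List (ℕ × MTree)) (i : ℕ) (h : i < Δ.length),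
      RhoPlus (.node Δ Γ) (.node (Δ.get ⟨i, h⟩ :: Δ) Γ)

inductive RhoMinus : MTree → MTree → Prop where
  | mk : ∀ (Δ : List ℕ) (Γ : List (ℕ × MTree)) (i : ℕ), i < Δ.length →
      RhoMinus (.node Δ Γ) (.node (Δ.eraseIdx i) Γ)

inductive Sigma' : MTree → MTree → Prop where
  | mk : ∀ (Δ : List ℕ) (Γ : List (ℕ × MTree)) (i j : ℕ)
      (hi : i < Γ.length) (hj : j < Γ.length), i ≠ j →
      Sigma' (.node Δ Γ) (.node Δ ((Γ.set i (Γ.get ⟨j, hj⟩)).set j (Γ.get ⟨i, hi⟩)))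

inductive PiPlus : MTree → MTree → Prop where
  | mk : ∀ (Δ : List ℕ) (Γ : List (ℕ × MTree)) (i : ℕ) (h : i < Γ.length),
      PiPlus (.node Δ Γ) (.node Δ (Γ.get ⟨i, h⟩ :: Γ))

inductive PiMinus : MTree → MTree → Prop where
  | mk : ∀ (Δ : List ℕ) (Γ : List (ℕ × MTree)) (i : ℕ), i < Γ.length →
      PiMinus (.node Δ Γ) (.node Δ (Γ.eraseIdx i))

inductive FourR : MTree → MTree → Prop where
  | mk : ∀ (Δ : List ℕ) (Γ : List (ℕ × MTree)) (i : ℕ) (h : i < Γ.length)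
      (β : ℕ) (s : MTree),
      Γ.get ⟨i, h⟩ = (β, .node [] [(β, s)]) →
      FourR (.node Δ Γ) (.node Δ (Γ.set i (β, s)))

inductive MonoR : MTree → MTree → Prop where
  | mk : ∀ (Δ : List ℕ) (Γ : List (ℕ × MTree)) (i : ℕ) (h : i < Γ.length)
      (α β : ℕ) (s : MTree),
      Γ.get ⟨i, h⟩ = (α, s) → β < α →
      MonoR (.node Δ Γ) (.node Δ (Γ.set i (β, s)))

inductive JayR : MTree → MTree → Prop where
  | mk : ∀ (Δ : List ℕ) (Γ : List (ℕ × MTree)) (i j : ℕ)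
      (hi : i < Γ.length) (hj : j < Γ.length)
      (α β : ℕ) (Δ' : List ℕ) (Γ' : List (ℕ × MTree)) (s : MTree),
      i ≠ j → Γ.get ⟨i, hi⟩ = (α, .node Δ' Γ') → Γ.get ⟨j, hj⟩ = (β, s) → β < α →
      JayR (.node Δ Γ)
        (.node Δ ((Γ.set i (α, .node Δ' (Γ' ++ [(β, s)]))).eraseIdx j))

inductive Ax : Type where
  | four | mono | jay
deriving DecidableEq

def axRule : Ax → MTree → MTree → Prop
  | .four => FourR
  | .mono => MonoR
  | .jay  => JayR

def rootStep (A : Set Ax) (t t' : MTree) : Prop :=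
  RhoPlus t t' ∨ RhoMinus t t' ∨ Sigma' t t' ∨ PiPlus t t' ∨ PiMinus t t' ∨
    ∃ a ∈ A, axRule a t t'

def deepStep (R : MTree → MTree → Prop) (t t' : MTree) : Prop :=
  ∃ k s', IsPos k t ∧ R (subtree k t) s' ∧ t' = replace k t s'

def Rw (A : Set Ax) : MTree → MTree → Prop :=
  Relation.ReflTransGen (deepStep (rootStep A))

end MTree

inductive SPF : Type where
  | top
  | var : ℕ → SPF
  | dia : ℕ → SPF → SPF
  | and : SPF → SPF → SPF

namespace SPF

def md : SPF → ℕ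
  | .top => 0
  | .var _ => 0
  | .dia _ φ => φ.md + 1
  | .and φ ψ => max φ.md ψ.md

def bigAnd : List SPF → SPF
  | [] => .top
  | φ :: l => .and φ (bigAnd l)

def toTree : SPF → MTree
  | .top => .node [] []
  | .var p => .node [p] []
  | .dia α φ => .node [] [(α, toTree φ)]
  | .and φ ψ => (toTree φ).sum (toTree ψ)

end SPF

namespace MTree
mutual
def toForm : MTree → SPF
  | .node Δ Γ => .and (SPF.bigAnd (Δ.map .var)) (toFormL Γ)
def toFormL : List (ℕ × MTree) → SPF
  | [] => .top
  | (α, t) :: Γ => .and (.dia α (toForm t)) (toFormL Γ)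
end
end MTree

inductive Deriv (A : Set MTree.Ax) : SPF → SPF → Prop where
  | refl (φ) : Deriv A φ φ
  | top (φ) : Deriv A φ .top
  | trans {φ ψ χ} : Deriv A φ ψ → Deriv A ψ χ → Deriv A φ χ
  | andE1 (φ ψ) : Deriv A (.and φ ψ) φ
  | andE2 (φ ψ) : Deriv A (.and φ ψ) ψ
  | andI {φ ψ χ} : Deriv A φ ψ → Deriv A φ χ → Deriv A φ (.and ψ χ)
  | dist {φ ψ} (α : ℕ) : Deriv A φ ψ → Deriv A (.dia α φ) (.dia α ψ)
  | four (α : ℕ) (φ) : MTree.Ax.four ∈ A → Deriv A (.dia α (.dia α φ)) (.dia α φ)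
  | mono (α β : ℕ) (φ) : MTree.Ax.mono ∈ A → β < α → Deriv A (.dia α φ) (.dia β φ)
  | jay (α β : ℕ) (φ ψ) : MTree.Ax.jay ∈ A → β < α →
      Deriv A (.and (.dia α φ) (.dia β ψ)) (.dia α (.and φ (.dia β ψ)))

inductive RuleKind : Type where
  | rhoP | rhoM | sigma | piP | piM | four | mono | jay
deriving DecidableEq

def RuleKind.rel : RuleKind → MTree → MTree → Prop
  | .rhoP => MTree.RhoPlus
  | .rhoM => MTree.RhoMinus
  | .sigma => MTree.Sigma'
  | .piP => MTree.PiPlus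
  | .piM => MTree.PiMinus
  | .four => MTree.FourR
  | .mono => MTree.MonoR
  | .jay => MTree.JayR

def listRw : List RuleKind → MTree → MTree → Prop
  | [], t, s => t = s
  | μ :: Ω, t, s => ∃ u, MTree.deepStep μ.rel t u ∧ listRw Ω u s


/- A π⁺ step at the root only prepends a copy of a child, so it keeps the height, adds one
child to the root and adds at most n(T) − 1 nodes. At depth the step rewrites one subtree
`u` to `u'`, which keeps the height, raises the width by at most one, and satisfies
n(S) + n(u) = n(T) + n(u'); hence n(S) + 1 ≤ 2 n(T), i.e. n(S) − 1 ≤ 2 (n(T) − 1), and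
m steps give n(S) − 1 ≤ 2^m (n(T) − 1). -/

namespace MTree

theorem numNodesL_cons (p : ℕ × MTree) (Γ : List (ℕ × MTree)) :
    numNodesL (p :: Γ) = numNodes p.2 + numNodesL Γ := by
  cases p; rw [numNodesL]

theorem heightL_cons (p : ℕ × MTree) (Γ : List (ℕ × MTree)) :
    heightL (p :: Γ) = max (height p.2) (heightL Γ) := by
  cases p; rw [heightL]

theorem widthL_cons (p : ℕ × MTree) (Γ : List (ℕ × MTree)) :
    widthL (p :: Γ) = max (width p.2) (widthL Γ) := by
  cases p; rw [widthL]

theorem height_node_of_ne_nil (Δ : List ℕ) {Γ : List (ℕ × MTree)} (h : Γ ≠ []) :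
    height (node Δ Γ) = heightL Γ + 1 := by
  cases Γ with
  | nil => exact absurd rfl h
  | cons p Γ => rw [height]

theorem width_node_of_ne_nil (Δ : List ℕ) {Γ : List (ℕ × MTree)} (h : Γ ≠ []) :
    width (node Δ Γ) = max Γ.length (widthL Γ) := by
  cases Γ with
  | nil => exact absurd rfl h
  | cons p Γ => rw [width]

theorem numNodes_getElem_le :
    ∀ (Γ : List (ℕ × MTree)) (i : ℕ) (hi : i < Γ.length), numNodes Γ[i].2 ≤ numNodesL Γ
  | p :: _, 0, _ => by rw [numNodesL_cons]; simp
  | p :: Γ, i + 1, hi => by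
    rw [numNodesL_cons]
    have := numNodes_getElem_le Γ i (by simpa using hi)
    simp only [List.getElem_cons_succ]
    omega

theorem height_getElem_le :
    ∀ (Γ : List (ℕ × MTree)) (i : ℕ) (hi : i < Γ.length), height Γ[i].2 ≤ heightL Γ
  | p :: _, 0, _ => by rw [heightL_cons]; simp
  | p :: Γ, i + 1, hi => by
    rw [heightL_cons]
    have := height_getElem_le Γ i (by simpa using hi)
    simp only [List.getElem_cons_succ]
    omega

theorem width_getElem_le :
    ∀ (Γ : List (ℕ × MTree)) (i : ℕ) (hi : i < Γ.length), width Γ[i].2 ≤ widthL Γ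
  | p :: _, 0, _ => by rw [widthL_cons]; simp
  | p :: Γ, i + 1, hi => by
    rw [widthL_cons]
    have := width_getElem_le Γ i (by simpa using hi)
    simp only [List.getElem_cons_succ]
    omega

theorem numNodesL_modify (f : ℕ × MTree → ℕ × MTree) :
    ∀ (Γ : List (ℕ × MTree)) (i : ℕ) (hi : i < Γ.length),
      numNodesL (Γ.modify i f) + numNodes Γ[i].2 = numNodesL Γ + numNodes (f Γ[i]).2
  | p :: Γ, 0, _ => by
    simp only [List.modify_zero_cons, numNodesL_cons, List.getElem_cons_zero]
    omega
  | p :: Γ, i + 1, hi => by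
    have := numNodesL_modify f Γ i (by simpa using hi)
    simp only [List.modify_succ_cons, numNodesL_cons, List.getElem_cons_succ]
    omega

theorem heightL_modify (f : ℕ × MTree → ℕ × MTree) :
    ∀ (Γ : List (ℕ × MTree)) (i : ℕ) (hi : i < Γ.length),
      height (f Γ[i]).2 = height Γ[i].2 → heightL (Γ.modify i f) = heightL Γ
  | p :: Γ, 0, _, h => by
    simp only [List.getElem_cons_zero] at h
    simp only [List.modify_zero_cons, heightL_cons, h]
  | p :: Γ, i + 1, hi, h => by
    simp only [List.modify_succ_cons, heightL_cons]
    rw [heightL_modify f Γ i (by simpa using hi) h]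

theorem widthL_modify_le (f : ℕ × MTree → ℕ × MTree) (c : ℕ) :
    ∀ (Γ : List (ℕ × MTree)) (i : ℕ) (hi : i < Γ.length),
      width (f Γ[i]).2 ≤ width Γ[i].2 + c → widthL (Γ.modify i f) ≤ widthL Γ + c
  | p :: Γ, 0, _, h => by
    simp only [List.modify_zero_cons, widthL_cons] at h ⊢
    simp only [List.getElem_cons_zero] at h
    omega
  | p :: Γ, i + 1, hi, h => by
    have := widthL_modify_le f c Γ i (by simpa using hi) h
    simp only [List.modify_succ_cons, widthL_cons]
    omega

theorem subtree_cons {Δ : List ℕ} {Γ : List (ℕ × MTree)} {i : ℕ} (k : List ℕ)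
    (hi : i < Γ.length) : subtree (i :: k) (node Δ Γ) = subtree k Γ[i].2 := by
  rw [subtree, List.getElem?_eq_getElem hi]

theorem replace_cons (Δ : List ℕ) (Γ : List (ℕ × MTree)) (i : ℕ) (k : List ℕ)
    (s : MTree) :
    replace (i :: k) (node Δ Γ) s = node Δ (Γ.modify i fun p => (p.1, replace k p.2 s)) := by
  rw [replace]

theorem ne_nil_of_lt_length {α : Type*} {l : List α} {i : ℕ} (hi : i < l.length) :
    l ≠ [] :=
  List.ne_nil_of_length_pos (Nat.zero_lt_of_lt hi)

theorem modify_ne_nil {α : Type*} {l : List α} {i : ℕ} (hi : i < l.length) (f : α → α) :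
    l.modify i f ≠ [] :=
  ne_nil_of_lt_length (by rwa [List.length_modify])

section Replace

variable {k : List ℕ} {t : MTree}

theorem numNodes_subtree_le (hk : IsPos k t) : numNodes (subtree k t) ≤ numNodes t := by
  induction hk with
  | nil => rfl
  | @cons Δ Γ i k hi _ ih =>
    rw [subtree_cons k hi, numNodes]
    have := numNodes_getElem_le Γ i hi
    simp only [List.get_eq_getElem] at ih
    omega

theorem numNodes_replace (hk : IsPos k t) (s : MTree) :
    numNodes (replace k t s) + numNodes (subtree k t) = numNodes t + numNodes s := by
  induction hk with
  | nil => simp only [replace, subtree]; omega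
  | @cons Δ Γ i k hi _ ih =>
    rw [replace_cons, subtree_cons k hi, numNodes, numNodes]
    have := numNodesL_modify (fun p => (p.1, replace k p.2 s)) Γ i hi
    dsimp only at this
    simp only [List.get_eq_getElem] at ih
    omega

theorem height_replace (hk : IsPos k t) {s : MTree} (h : height s = height (subtree k t)) :
    height (replace k t s) = height t := by
  induction hk with
  | nil => exact h
  | @cons Δ Γ i k hi _ ih =>
    rw [subtree_cons k hi] at h
    rw [replace_cons, height_node_of_ne_nil Δ (modify_ne_nil hi _),
      height_node_of_ne_nil Δ (ne_nil_of_lt_length hi), heightL_modify _ Γ i hi (ih h)]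

theorem width_replace_le (hk : IsPos k t) {s : MTree} {c : ℕ}
    (h : width s ≤ width (subtree k t) + c) : width (replace k t s) ≤ width t + c := by
  induction hk with
  | nil => exact h
  | @cons Δ Γ i k hi _ ih =>
    rw [subtree_cons k hi] at h
    rw [replace_cons, width_node_of_ne_nil Δ (modify_ne_nil hi _),
      width_node_of_ne_nil Δ (ne_nil_of_lt_length hi), List.length_modify]
    have := widthL_modify_le (fun p => (p.1, replace k p.2 s)) c Γ i hi (ih h)
    omega

end Replace

namespace PiPlus

variable {t s : MTree}

theorem height_eq (h : PiPlus t s) : height s = height t := by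
  obtain ⟨Δ, Γ, i, hi⟩ := h
  rw [height_node_of_ne_nil Δ (List.cons_ne_nil _ _),
    height_node_of_ne_nil Δ (ne_nil_of_lt_length hi), heightL_cons]
  have := height_getElem_le Γ i hi
  simp only [List.get_eq_getElem]
  omega

theorem width_le (h : PiPlus t s) : width s ≤ width t + 1 := by
  obtain ⟨Δ, Γ, i, hi⟩ := h
  rw [width_node_of_ne_nil Δ (List.cons_ne_nil _ _),
    width_node_of_ne_nil Δ (ne_nil_of_lt_length hi), widthL_cons, List.length_cons]
  have := width_getElem_le Γ i hi
  simp only [List.get_eq_getElem]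
  omega

theorem numNodes_add_one_le (h : PiPlus t s) : numNodes s + 1 ≤ 2 * numNodes t := by
  obtain ⟨Δ, Γ, i, hi⟩ := h
  rw [numNodes, numNodes, numNodesL_cons]
  have := numNodes_getElem_le Γ i hi
  simp only [List.get_eq_getElem]
  omega

end PiPlus

theorem deepStep_piPlus {t s : MTree} (h : deepStep PiPlus t s) :
    height s = height t ∧ width s ≤ width t + 1 ∧ numNodes s + 1 ≤ 2 * numNodes t := by
  obtain ⟨k, s', hk, hstep, rfl⟩ := h
  refine ⟨height_replace hk hstep.height_eq, width_replace_le hk hstep.width_le, ?_⟩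
  have := numNodes_replace hk s'
  have := numNodes_subtree_le hk
  have := hstep.numNodes_add_one_le
  omega

end MTree

theorem listRw_piP {Ω : List RuleKind} (hΩ : ∀ μ ∈ Ω, μ = RuleKind.piP) {t s : MTree}
    (h : listRw Ω t s) :
    s.height = t.height ∧ s.width ≤ Ω.length + t.width ∧
      s.numNodes + 2 ^ Ω.length ≤ 2 ^ Ω.length * t.numNodes + 1 := by
  induction Ω generalizing t with
  | nil => cases h; simp
  | cons μ Ω ih =>
    obtain ⟨u, hstep, hrest⟩ := h
    obtain rfl : μ = .piP := hΩ μ List.mem_cons_self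
    obtain ⟨hu_height, hu_width, hu_nodes⟩ := MTree.deepStep_piPlus hstep
    obtain ⟨hs_height, hs_width, hs_nodes⟩ :=
      ih (fun ν hν => hΩ ν (List.mem_cons_of_mem _ hν)) hrest
    refine ⟨hs_height.trans hu_height, by simp only [List.length_cons]; omega, ?_⟩
    have : 2 ^ Ω.length * (u.numNodes + 1) ≤ 2 ^ Ω.length * (2 * t.numNodes) :=
      Nat.mul_le_mul_left _ hu_nodes
    rw [List.length_cons, pow_succ]
    nlinarith

theorem stmt19 (Ω : List RuleKind) (hΩ : ∀ μ ∈ Ω, μ = RuleKind.piP)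
    (t s : MTree) (h : listRw Ω t s) :
    s.height = t.height ∧ s.width ≤ Ω.length + t.width ∧
    s.numNodes ≤ 2 ^ Ω.length * t.numNodes - (2 ^ Ω.length - 1) := by
  obtain ⟨h_height, h_width, h_nodes⟩ := listRw_piP hΩ h
  refine ⟨h_height, h_width, ?_⟩
  have : 1 ≤ 2 ^ Ω.length := Nat.one_le_two_pow
  omega
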